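/- Let W be a k-wheel and T a coupled spanning tree of W. Suppose for indices 1 ≤ i < j ≤ k that val_T(v_i) = 1, val_T(v_{i+1}) = ⋯ = val_T(v_j) = 2, and val_T(v_{j+1}) = 1 (or the same with 1 and 2 interchanged). Then exactly one of the two chords v_i v_{i+1} and v_j v_{j+1} belongs to T. -/

import Mathlib

/-- The edge set of the `k`-wheel: center `none`, spokes `some i`, `i : ZMod k`. -/
def wheelEdges (k : ℕ) : Set (Sym2 (Option (ZMod k))) :=
  {e | ∃ i : ZMod k, e = s(none, some i) ∨ e = s(some i, some (i + 1))}

/-- `T` is a coupled spanning tree of the `k`-wheel. -/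
def IsCoupledTree (k : ℕ) (T : Set (Sym2 (Option (ZMod k)))) : Prop :=
  T ⊆ wheelEdges k ∧ (SimpleGraph.fromEdgeSet T).IsTree ∧
    (SimpleGraph.fromEdgeSet (wheelEdges k \ T)).IsTree

/-- The valence of a vertex `x` with respect to an edge set `T`. -/
noncomputable def valOf {k : ℕ} (T : Set (Sym2 (Option (ZMod k))))
    (x : Option (ZMod k)) : ℕ :=
  {e ∈ T | x ∈ e}.ncard

/-!
A rim vertex lies on exactly three wheel edges, its spoke and its two chords, so its valence in `T`
and in the complementary tree add up to 3; this turns the pattern 2, 1, …, 1, 2 for `T` into the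
pattern 1, 2, …, 2, 1 for the complement, and the two chords swap membership. In the pattern
1, 2, …, 2, 1, the edges at a vertex of valence 2 missing a chord, or of valence 1 containing one,
are determined.
If both end chords are missing from `T`, then `v_{i+1}` and the first vertex after it whose outgoing
chord is missing both carry spokes and are joined by chords of `T`: a cycle through the hub. If both
end chords are in `T`, either all chords from `v_i` to `v_{j+1}` are in `T` and those vertices
form a component of `T` missing the hub, or at the first missing chord `v_m v_{m+1}` all other
edges at `v_m` and `v_{m+1}` are in `T`, so `{v_m, v_{m+1}}` is a component of the complement.
-/

open SimpleGraph

theorem Nat.exists_least_not_of_le {p : ℕ → Prop} {m n : ℕ} (hm : p m) (hn : ¬p n)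
    (hmn : m ≤ n) :
    ∃ l, m < l ∧ l ≤ n ∧ ¬p l ∧ ∀ t, m ≤ t → t < l → p t := by
  classical
  have hex : ∃ l, m ≤ l ∧ ¬p l := ⟨n, hmn, hn⟩
  obtain ⟨hml, hl⟩ := Nat.find_spec hex
  refine ⟨Nat.find hex, lt_of_le_of_ne hml fun h => hl (h ▸ hm),
    Nat.find_min' hex ⟨hmn, hn⟩, hl, fun t hmt htl => ?_⟩
  by_contra ht
  exact Nat.find_min hex htl ⟨hmt, ht⟩

namespace SimpleGraph

variable {V : Type*} {G : SimpleGraph V}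

theorem Reachable.mem_of_forall_adj_mem {S : Set V}
    (hS : ∀ ⦃x y⦄, x ∈ S → G.Adj x y → y ∈ S) {x y : V} (h : G.Reachable x y)
    (hx : x ∈ S) : y ∈ S := by
  obtain ⟨w⟩ := h
  induction w with
  | nil => exact hx
  | cons hadj _ ih => exact ih (hS hx hadj)

theorem reachable_of_forall_adj_succ (f : ℕ → V) {m n : ℕ} (hmn : m ≤ n)
    (h : ∀ t, m ≤ t → t < n → G.Adj (f t) (f (t + 1))) : G.Reachable (f m) (f n) := by
  induction n, hmn using Nat.le_induction with
  | base => rfl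
  | succ n hmn ih =>
    exact (ih fun t hmt htn => h t hmt (by omega)).trans (h n hmn (by omega)).reachable

theorem IsAcyclic.not_reachable_fromEdgeSet_diff {T : Set (Sym2 V)}
    (hT : (fromEdgeSet T).IsAcyclic) {u v : V} (he : s(u, v) ∈ T) (huv : u ≠ v) :
    ¬(fromEdgeSet (T \ {s(u, v)})).Reachable u v := by
  have := isAcyclic_iff_forall_adj_isBridge.mp hT ((fromEdgeSet_adj T).mpr ⟨he, huv⟩)
  rwa [isBridge_iff, deleteEdges_fromEdgeSet] at this

end SimpleGraph

theorem IsCoupledTree.compl {k : ℕ} {T : Set (Sym2 (Option (ZMod k)))} (hT : IsCoupledTree k T) :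
    IsCoupledTree k (wheelEdges k \ T) := by
  obtain ⟨hsub, htree, htree'⟩ := hT
  exact ⟨Set.sdiff_subset, htree', by rwa [Set.sdiff_sdiff_cancel_left hsub]⟩

namespace Wheel

variable {k : ℕ}

def spoke (a : ZMod k) : Sym2 (Option (ZMod k)) := s(none, some a)

def chord (a : ZMod k) : Sym2 (Option (ZMod k)) := s(some a, some (a + 1))

theorem spoke_mem_wheelEdges (a : ZMod k) : spoke a ∈ wheelEdges k := ⟨a, .inl rfl⟩

theorem chord_mem_wheelEdges (a : ZMod k) : chord a ∈ wheelEdges k := ⟨a, .inr rfl⟩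

theorem spoke_ne_chord (a b : ZMod k) : spoke a ≠ chord b := by
  simp [spoke, chord]

theorem chord_sub_one (a : ZMod k) : chord (a - 1) = s(some a, some (a - 1)) := by
  rw [chord, sub_add_cancel, Sym2.eq_swap]

theorem chord_sub_one_ne_chord (hk : 3 ≤ k) (a : ZMod k) : chord (a - 1) ≠ chord a := by
  have two_ne_zero : (2 : ZMod k) ≠ 0 := by
    intro h
    have := (ZMod.natCast_eq_zero_iff 2 k).mp (by exact_mod_cast h)
    exact absurd (Nat.le_of_dvd two_pos this) (by omega)
  rw [chord_sub_one, chord, Ne, Sym2.congr_right, Option.some.injEq]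
  intro h
  exact two_ne_zero (by linear_combination -h)

theorem mem_wheelEdges_and_some_mem_iff (a : ZMod k) {e : Sym2 (Option (ZMod k))} :
    e ∈ wheelEdges k ∧ some a ∈ e ↔ e = spoke a ∨ e = chord (a - 1) ∨ e = chord a := by
  constructor
  · rintro ⟨⟨t, rfl | rfl⟩, ha⟩ <;>
      simp only [Sym2.mem_iff, Option.some.injEq, reduceCtorEq, false_or] at ha
    · exact .inl (by rw [ha]; rfl)
    · rcases ha with rfl | rfl
      · exact .inr (.inr rfl)
      · exact .inr (.inl (by rw [add_sub_cancel_right]; rfl))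
  · rintro (rfl | rfl | rfl)
    · exact ⟨spoke_mem_wheelEdges a, by simp [spoke]⟩
    · exact ⟨chord_mem_wheelEdges _, by simp [chord_sub_one]⟩
    · exact ⟨chord_mem_wheelEdges a, by simp [chord]⟩

variable {T : Set (Sym2 (Option (ZMod k)))}

theorem adj_some (hT : T ⊆ wheelEdges k) {a : ZMod k} {y : Option (ZMod k)}
    (h : (fromEdgeSet T).Adj (some a) y) :
    spoke a ∈ T ∧ y = none ∨ chord a ∈ T ∧ y = some (a + 1) ∨
      chord (a - 1) ∈ T ∧ y = some (a - 1) := by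
  obtain ⟨he, -⟩ := (fromEdgeSet_adj T).mp h
  rcases (mem_wheelEdges_and_some_mem_iff a).mp ⟨hT he, Sym2.mem_mk_left _ _⟩ with h | h | h
  · rw [spoke, Sym2.eq_swap (a := none), Sym2.congr_right] at h
    subst h
    exact .inl ⟨by rwa [spoke, Sym2.eq_swap], rfl⟩
  · rw [chord_sub_one, Sym2.congr_right] at h
    subst h
    exact .inr (.inr ⟨by rwa [chord_sub_one], rfl⟩)
  · rw [chord, Sym2.congr_right] at h
    subst h
    exact .inr (.inl ⟨he, rfl⟩)

open Classical in
theorem valOf_some (hk : 3 ≤ k) (hT : T ⊆ wheelEdges k) (a : ZMod k) :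
    valOf T (some a) = (if spoke a ∈ T then 1 else 0) + (if chord (a - 1) ∈ T then 1 else 0) +
      (if chord a ∈ T then 1 else 0) := by
  have hedges : {e ∈ T | some a ∈ e} =
      ↑(({spoke a, chord (a - 1), chord a} : Finset _).filter (· ∈ T)) := by
    ext e
    rw [Finset.coe_filter, Set.mem_ofPred_eq, Set.mem_ofPred_eq, Finset.mem_insert,
      Finset.mem_insert, Finset.mem_singleton, ← mem_wheelEdges_and_some_mem_iff]
    constructor
    · exact fun ⟨he, ha⟩ => ⟨⟨hT he, ha⟩, he⟩
    · exact fun ⟨⟨_, ha⟩, he⟩ => ⟨he, ha⟩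
  rw [valOf, hedges, Set.ncard_coe_finset, Finset.card_filter,
    Finset.sum_insert (by simp [spoke_ne_chord]),
    Finset.sum_insert (by simpa using chord_sub_one_ne_chord hk a), Finset.sum_singleton, add_assoc]

theorem valOf_compl_add_valOf (hk : 3 ≤ k) (hT : T ⊆ wheelEdges k) (a : ZMod k) :
    valOf (wheelEdges k \ T) (some a) + valOf T (some a) = 3 := by
  classical
  rw [valOf_some hk Set.sdiff_subset, valOf_some hk hT]
  simp only [Set.mem_sdiff, spoke_mem_wheelEdges, chord_mem_wheelEdges, true_and]
  split_ifs <;> simp_all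

section Valence

variable {a : ZMod k}

theorem spoke_mem_and_chord_mem_of_valOf_eq_two (hk : 3 ≤ k) (hT : T ⊆ wheelEdges k)
    (h : valOf T (some a) = 2) (hc : chord (a - 1) ∉ T) : spoke a ∈ T ∧ chord a ∈ T := by
  classical
  rw [valOf_some hk hT] at h
  split_ifs at h <;> simp_all

theorem spoke_mem_and_chord_sub_one_mem_of_valOf_eq_two (hk : 3 ≤ k) (hT : T ⊆ wheelEdges k)
    (h : valOf T (some a) = 2) (hc : chord a ∉ T) : spoke a ∈ T ∧ chord (a - 1) ∈ T := by
  classical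
  rw [valOf_some hk hT] at h
  split_ifs at h <;> simp_all

theorem spoke_not_mem_of_valOf_eq_two (hk : 3 ≤ k) (hT : T ⊆ wheelEdges k)
    (h : valOf T (some a) = 2) (hc : chord (a - 1) ∈ T) (hc' : chord a ∈ T) :
    spoke a ∉ T := by
  classical
  rw [valOf_some hk hT] at h
  split_ifs at h <;> simp_all

theorem spoke_not_mem_and_chord_sub_one_not_mem_of_valOf_eq_one (hk : 3 ≤ k)
    (hT : T ⊆ wheelEdges k) (h : valOf T (some a) = 1) (hc : chord a ∈ T) :
    spoke a ∉ T ∧ chord (a - 1) ∉ T := by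
  classical
  rw [valOf_some hk hT] at h
  split_ifs at h <;> simp_all

theorem spoke_not_mem_and_chord_not_mem_of_valOf_eq_one (hk : 3 ≤ k) (hT : T ⊆ wheelEdges k)
    (h : valOf T (some a) = 1) (hc : chord (a - 1) ∈ T) : spoke a ∉ T ∧ chord a ∉ T := by
  classical
  rw [valOf_some hk hT] at h
  split_ifs at h <;> simp_all

end Valence

theorem adj_of_chord_mem (hk : 1 < k) {b : ZMod k} (h : chord b ∈ T) :
    (fromEdgeSet T).Adj (some b) (some (b + 1)) := by
  have : Fact (1 < k) := ⟨hk⟩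
  exact (fromEdgeSet_adj T).mpr ⟨h, by simp⟩

theorem spoke_add_one_ne_spoke_add (a : ZMod k) {l : ℕ} (hl : 1 < l) (hlk : l ≤ k) :
    spoke (a + 1) ≠ spoke (a + (l : ZMod k)) := by
  rw [spoke, spoke, Ne, Sym2.congr_right, Option.some.injEq, add_right_inj, ← Nat.cast_one,
    ZMod.natCast_eq_natCast_iff, Nat.modEq_iff_dvd' hl.le]
  exact fun h => absurd (Nat.le_of_dvd (by omega) h) (by omega)

theorem chord_mem_or_chord_add_mem (hk : 3 ≤ k) (hT : T ⊆ wheelEdges k)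
    (hacyc : (fromEdgeSet T).IsAcyclic) (a : ZMod k) {d : ℕ} (hd : 1 ≤ d) (hdk : d ≤ k)
    (hval : ∀ n : ℕ, 1 ≤ n → n ≤ d → valOf T (some (a + (n : ZMod k))) = 2) :
    chord a ∈ T ∨ chord (a + (d : ZMod k)) ∈ T := by
  by_contra! h
  obtain ⟨ha, had⟩ := h
  obtain ⟨hs1, hc1⟩ := spoke_mem_and_chord_mem_of_valOf_eq_two hk hT (hval 1 le_rfl hd)
    (by simpa using ha)
  obtain ⟨l, hl1, hld, hl, hrun⟩ := Nat.exists_least_not_of_le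
    (p := fun t : ℕ => chord (a + (t : ZMod k)) ∈ T) (by simpa using hc1) had hd
  have hsl := (spoke_mem_and_chord_sub_one_mem_of_valOf_eq_two hk hT (hval l hl1.le hld) hl).1
  refine hacyc.not_reachable_fromEdgeSet_diff hsl (Option.some_ne_none _).symm ?_
  have hstart : (fromEdgeSet (T \ {spoke (a + (l : ZMod k))})).Adj none
      (some (a + ((1 : ℕ) : ZMod k))) := by
    rw [Nat.cast_one] at hs1 ⊢
    exact (fromEdgeSet_adj _).mpr
      ⟨⟨hs1, spoke_add_one_ne_spoke_add a hl1 (hld.trans hdk)⟩,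
        (Option.some_ne_none _).symm⟩
  refine hstart.reachable.trans
    (reachable_of_forall_adj_succ (fun t : ℕ => some (a + (t : ZMod k))) hl1.le
      fun t ht1 htl => ?_)
  rw [Nat.cast_succ, ← add_assoc]
  exact adj_of_chord_mem (by omega) ⟨hrun t ht1 htl, (spoke_ne_chord _ _).symm⟩

theorem not_connected_compl_of_chord_not_mem (hk : 3 ≤ k) (hT : T ⊆ wheelEdges k) {b : ZMod k}
    (hb : valOf T (some b) = 2) (hb' : valOf T (some (b + 1)) = 2) (hc : chord (b - 1) ∈ T)
    (hc' : chord b ∉ T) : ¬(fromEdgeSet (wheelEdges k \ T)).Connected := by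
  intro hconn
  have hs := (spoke_mem_and_chord_sub_one_mem_of_valOf_eq_two hk hT hb hc').1
  obtain ⟨hs', hc''⟩ :=
    spoke_mem_and_chord_mem_of_valOf_eq_two hk hT hb' (by rwa [add_sub_cancel_right])
  have hclosed : ∀ ⦃x y⦄, x ∈ ({some b, some (b + 1)} : Set _) →
      (fromEdgeSet (wheelEdges k \ T)).Adj x y → y ∈ ({some b, some (b + 1)} : Set _) := by
    rintro _ y (rfl | rfl) hadj <;>
      rcases adj_some Set.sdiff_subset hadj with ⟨hy, rfl⟩ | ⟨hy, rfl⟩ | ⟨hy, rfl⟩ <;>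
      simp_all
  simpa using (hconn (some b) none).mem_of_forall_adj_mem hclosed (by simp)

theorem not_connected_of_forall_chord_mem (hk : 3 ≤ k) (hT : T ⊆ wheelEdges k) {a : ZMod k}
    {d : ℕ} (h0 : valOf T (some a) = 1)
    (hval : ∀ n : ℕ, 1 ≤ n → n ≤ d → valOf T (some (a + (n : ZMod k))) = 2)
    (hlast : valOf T (some (a + (d : ZMod k) + 1)) = 1)
    (hall : ∀ n : ℕ, n ≤ d → chord (a + (n : ZMod k)) ∈ T) :
    ¬(fromEdgeSet T).Connected := by
  intro hconn
  have hfirst := spoke_not_mem_and_chord_sub_one_not_mem_of_valOf_eq_one hk hT h0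
    (by simpa using hall 0 d.zero_le)
  have hlast' := spoke_not_mem_and_chord_not_mem_of_valOf_eq_one hk hT hlast
    (by rw [add_sub_cancel_right]; exact hall d le_rfl)
  have hclosed : ∀ ⦃x y⦄, x ∈ {x | ∃ n ≤ d + 1, x = some (a + (n : ZMod k))} →
      (fromEdgeSet T).Adj x y → y ∈ {x | ∃ n ≤ d + 1, x = some (a + (n : ZMod k))} := by
    rintro _ y ⟨n, hn, rfl⟩ hadj
    rcases adj_some hT hadj with ⟨hy, rfl⟩ | ⟨hy, rfl⟩ | ⟨hy, rfl⟩
    · rcases n with _ | n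
      · exact absurd (by simpa using hy) hfirst.1
      rcases (show n + 1 ≤ d ∨ n = d by omega) with hnd | rfl
      · refine absurd hy
          (spoke_not_mem_of_valOf_eq_two hk hT (hval _ (by omega) hnd) ?_ (hall _ hnd))
        simpa [← add_assoc] using hall n (by omega)
      · exact absurd (by simpa [add_assoc] using hy) hlast'.1
    · rcases (show n ≤ d ∨ n = d + 1 by omega) with hnd | rfl
      · exact ⟨n + 1, by omega, by rw [Nat.cast_succ, add_assoc]⟩
      · exact absurd (by simpa [add_assoc] using hy) hlast'.2
    · rcases n with _ | n
      · exact absurd (by simpa using hy) hfirst.2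
      · exact ⟨n, by omega, by rw [Nat.cast_succ, ← add_assoc, add_sub_cancel_right]⟩
  obtain ⟨n, -, h⟩ :=
    (hconn (some a) none).mem_of_forall_adj_mem hclosed ⟨0, by omega, by simp⟩
  exact Option.some_ne_none _ h.symm

theorem not_chord_mem_and_chord_add_mem (hk : 3 ≤ k) (hT : T ⊆ wheelEdges k)
    (hconn : (fromEdgeSet T).Connected) (hconn' : (fromEdgeSet (wheelEdges k \ T)).Connected)
    (a : ZMod k) {d : ℕ} (h0 : valOf T (some a) = 1)
    (hval : ∀ n : ℕ, 1 ≤ n → n ≤ d → valOf T (some (a + (n : ZMod k))) = 2)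
    (hlast : valOf T (some (a + (d : ZMod k) + 1)) = 1) :
    ¬(chord a ∈ T ∧ chord (a + (d : ZMod k)) ∈ T) := by
  rintro ⟨ha, had⟩
  by_cases hall : ∀ n : ℕ, n ≤ d → chord (a + (n : ZMod k)) ∈ T
  · exact not_connected_of_forall_chord_mem hk hT h0 hval hlast hall hconn
  push Not at hall
  obtain ⟨n₀, hn₀d, hn₀⟩ := hall
  obtain ⟨l, hl0, hln₀, hl, hrun⟩ := Nat.exists_least_not_of_le
    (p := fun t : ℕ => chord (a + (t : ZMod k)) ∈ T) (by simpa using ha) hn₀ n₀.zero_le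
  have hld : l < d := lt_of_le_of_ne (hln₀.trans hn₀d) (by rintro rfl; exact hl had)
  refine not_connected_compl_of_chord_not_mem hk hT (hval l hl0 hld.le) ?_ ?_ hl hconn'
  · simpa [add_assoc] using hval (l + 1) (by omega) hld
  · obtain ⟨l, rfl⟩ : ∃ l', l = l' + 1 := ⟨l - 1, by omega⟩
    simpa [← add_assoc] using hrun l l.zero_le (by omega)

theorem xor_chord_mem_chord_add_mem (hk : 3 ≤ k) (hT : IsCoupledTree k T) (a : ZMod k) {d : ℕ}
    (hd : 1 ≤ d) (hdk : d ≤ k) (h0 : valOf T (some a) = 1)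
    (hval : ∀ n : ℕ, 1 ≤ n → n ≤ d → valOf T (some (a + (n : ZMod k))) = 2)
    (hlast : valOf T (some (a + (d : ZMod k) + 1)) = 1) :
    Xor (chord a ∈ T) (chord (a + (d : ZMod k)) ∈ T) := by
  obtain ⟨hsub, htree, htree'⟩ := hT
  rw [xor_iff_or_and_not_and]
  exact ⟨chord_mem_or_chord_add_mem hk hsub htree.isAcyclic a hd hdk hval,
    not_chord_mem_and_chord_add_mem hk hsub htree.connected htree'.connected a h0 hval hlast⟩

end Wheel

theorem stmt5_general (k : ℕ) (hk : 3 ≤ k) (T : Set (Sym2 (Option (ZMod k))))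
    (hT : IsCoupledTree k T) (i j : ℕ) (hij : i < j) (hj : j ≤ k)
    (hcase :
      (valOf T (some (i : ZMod k)) = 1 ∧
        (∀ m : ℕ, i < m → m ≤ j → valOf T (some (m : ZMod k)) = 2) ∧
        valOf T (some ((j : ZMod k) + 1)) = 1) ∨
      (valOf T (some (i : ZMod k)) = 2 ∧
        (∀ m : ℕ, i < m → m ≤ j → valOf T (some (m : ZMod k)) = 1) ∧
        valOf T (some ((j : ZMod k) + 1)) = 2)) :
    Xor' (s(some (i : ZMod k), some ((i : ZMod k) + 1)) ∈ T)
      (s(some (j : ZMod k), some ((j : ZMod k) + 1)) ∈ T) := by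
  obtain ⟨d, rfl⟩ : ∃ d, j = i + d := ⟨j - i, by omega⟩
  show Xor (Wheel.chord (i : ZMod k) ∈ T) (Wheel.chord ((i + d : ℕ) : ZMod k) ∈ T)
  have hxor : ∀ U, IsCoupledTree k U → valOf U (some (i : ZMod k)) = 1 →
      (∀ m : ℕ, i < m → m ≤ i + d → valOf U (some (m : ZMod k)) = 2) →
      valOf U (some (((i + d : ℕ) : ZMod k) + 1)) = 1 →
      Xor (Wheel.chord (i : ZMod k) ∈ U) (Wheel.chord ((i + d : ℕ) : ZMod k) ∈ U) := by
    intro U hU h0 hval hlast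
    rw [Nat.cast_add] at hlast ⊢
    exact Wheel.xor_chord_mem_chord_add_mem hk hU _ (by omega) (by omega) h0
      (fun n h1 h2 => by simpa using hval (i + n) (by omega) (by omega)) hlast
  rcases hcase with ⟨h0, hval, hlast⟩ | ⟨h0, hval, hlast⟩
  · exact hxor T hT h0 hval hlast
  · have hcompl := Wheel.valOf_compl_add_valOf hk hT.1
    have := hxor _ hT.compl (by linarith [hcompl i]) (fun m h1 h2 => by
      linarith [hcompl m, hval m h1 h2]) (by linarith [hcompl (((i + d : ℕ) : ZMod k) + 1)])
    simpa only [Set.mem_sdiff, Wheel.chord_mem_wheelEdges, true_and, xor_not_not] using this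

theorem stmt5 (k : ℕ) (hk : 3 ≤ k) (T : Set (Sym2 (Option (ZMod k))))
    (hT : IsCoupledTree k T) (i j : ℕ) (hi : 1 ≤ i) (hij : i < j) (hj : j ≤ k)
    (hcase :
      (valOf T (some (i : ZMod k)) = 1 ∧
        (∀ m : ℕ, i < m → m ≤ j → valOf T (some (m : ZMod k)) = 2) ∧
        valOf T (some ((j : ZMod k) + 1)) = 1) ∨
      (valOf T (some (i : ZMod k)) = 2 ∧
        (∀ m : ℕ, i < m → m ≤ j → valOf T (some (m : ZMod k)) = 1) ∧
        valOf T (some ((j : ZMod k) + 1)) = 2)) :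
    Xor' (s(some (i : ZMod k), some ((i : ZMod k) + 1)) ∈ T)
      (s(some (j : ZMod k), some ((j : ZMod k) + 1)) ∈ T) :=
  stmt5_general k hk T hT i j hij hj hcase
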